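/- arXiv:0705.4548 — 3 statements merged into one kernel-verified Lean document; each statement's English description precedes it below -/
import Mathlib

section
/- Let A be an n×n matrix with nonnegative real entries. Let B be the random matrix obtained from A by replacing each entry A(i,j) by ε(i,j)·√(A(i,j)), where the ε(i,j) are independent random signs, each uniformly distributed on {1, −1}. Then E[(det B)²] = per(A). -/
/-- The random sign corresponding to a Boolean. -/
def rsign (b : Bool) : ℝ := if b then 1 else -1

lemma rsign_mul_self (b : Bool) : rsign b * rsign b = 1 := by
  cases b <;> simp [rsign]

lemma rsign_not (b : Bool) : rsign (!b) = -rsign b := by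
  cases b <;> simp [rsign]

lemma sum_rsign_pair {n : ℕ} (a b : Fin n) (h : a ≠ b) :
    ∑ v : Fin n → Bool, rsign (v a) * rsign (v b) = 0 := by
  have hinv : Function.Involutive
      (fun v : Fin n → Bool => Function.update v a (!v a)) := by
    intro v; funext x
    by_cases hx : x = a
    · subst hx; simp
    · simp [Function.update_of_ne hx]
  have key : ∑ v : Fin n → Bool, rsign (v a) * rsign (v b)
      = ∑ v : Fin n → Bool, -(rsign (v a) * rsign (v b)) := by
    refine Fintype.sum_bijective _ hinv.bijective _ _ fun v => ?_
    simp [Function.update_of_ne (Ne.symm h), rsign_not]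
  have h2 := key
  rw [Finset.sum_neg_distrib] at h2
  linarith

lemma sum_eps_prod {n : ℕ} (A : Matrix (Fin n) (Fin n) ℝ)
    (hA : ∀ i j, 0 ≤ A i j) (σ τ : Equiv.Perm (Fin n)) :
    ∑ ε : Fin n → Fin n → Bool,
      ∏ i, (rsign (ε (σ i) i) * Real.sqrt (A (σ i) i)) *
           (rsign (ε (τ i) i) * Real.sqrt (A (τ i) i))
    = if σ = τ then (2 : ℝ) ^ (n * n) * ∏ i, A (σ i) i else 0 := by
  classical
  have swapstep : ∑ ε : Fin n → Fin n → Bool,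
      ∏ i, (rsign (ε (σ i) i) * Real.sqrt (A (σ i) i)) *
           (rsign (ε (τ i) i) * Real.sqrt (A (τ i) i))
      = ∑ δ : Fin n → Fin n → Bool,
      ∏ i, (rsign (δ i (σ i)) * Real.sqrt (A (σ i) i)) *
           (rsign (δ i (τ i)) * Real.sqrt (A (τ i) i)) := by
    refine Fintype.sum_bijective Function.swap ?_ _ _ fun ε => rfl
    exact Function.Involutive.bijective fun _ => rfl
  rw [swapstep, ← Fintype.prod_sum
    (fun (i : Fin n) (v : Fin n → Bool) =>
      (rsign (v (σ i)) * Real.sqrt (A (σ i) i)) *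
      (rsign (v (τ i)) * Real.sqrt (A (τ i) i)))]
  have col : ∀ i : Fin n, ∑ v : Fin n → Bool,
      (rsign (v (σ i)) * Real.sqrt (A (σ i) i)) *
      (rsign (v (τ i)) * Real.sqrt (A (τ i) i))
      = if σ i = τ i then (2 : ℝ) ^ n * A (σ i) i else 0 := by
    intro i
    by_cases h : σ i = τ i
    · rw [if_pos h, ← h]
      have hv : ∀ v : Fin n → Bool,
          (rsign (v (σ i)) * Real.sqrt (A (σ i) i)) *
          (rsign (v (σ i)) * Real.sqrt (A (σ i) i)) = A (σ i) i := by
        intro v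
        rw [mul_mul_mul_comm, rsign_mul_self, one_mul,
          Real.mul_self_sqrt (hA (σ i) i)]
      rw [Finset.sum_congr rfl fun v _ => hv v, Finset.sum_const,
        Finset.card_univ]
      simp [mul_comm]
    · rw [if_neg h]
      have : ∑ v : Fin n → Bool,
          (rsign (v (σ i)) * Real.sqrt (A (σ i) i)) *
          (rsign (v (τ i)) * Real.sqrt (A (τ i) i))
          = (Real.sqrt (A (σ i) i) * Real.sqrt (A (τ i) i)) *
            ∑ v : Fin n → Bool, rsign (v (σ i)) * rsign (v (τ i)) := by
        rw [Finset.mul_sum]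
        exact Finset.sum_congr rfl fun v _ => by ring
      rw [this, sum_rsign_pair _ _ h, mul_zero]
  rw [Finset.prod_congr rfl fun i _ => col i]
  by_cases hστ : σ = τ
  · rw [if_pos hστ]
    subst hστ
    rw [Finset.prod_congr rfl fun i _ => if_pos rfl, Finset.prod_mul_distrib,
      Finset.prod_const, Finset.card_univ, Fintype.card_fin, ← pow_mul]
  · rw [if_neg hστ]
    obtain ⟨i, hi⟩ : ∃ i, σ i ≠ τ i := by
      by_contra hc; push_neg at hc; exact hστ (Equiv.ext hc)
    exact Finset.prod_eq_zero (Finset.mem_univ i) (if_neg hi)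

/-- For a matrix `A` with nonnegative real entries, letting `B ε` be obtained from `A`
by replacing each entry by an independent uniform random sign times the square root of the
entry, the expectation of `(det B)²` over the `2^(n²)` sign choices equals `per A`. -/
theorem expectation_det_sq_eq_permanent {n : ℕ} (A : Matrix (Fin n) (Fin n) ℝ)
    (hA : ∀ i j, 0 ≤ A i j) :
    (1 / 2 ^ (n * n) : ℝ) *
      ∑ ε : Fin n → Fin n → Bool,
        (Matrix.det (fun i j => rsign (ε i j) * Real.sqrt (A i j))) ^ 2
      = A.permanent := by
  classical
  have hdet : ∀ ε : Fin n → Fin n → Bool,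
      (Matrix.det (fun i j => rsign (ε i j) * Real.sqrt (A i j))) ^ 2
      = ∑ σ : Equiv.Perm (Fin n), ∑ τ : Equiv.Perm (Fin n),
          ((Equiv.Perm.sign σ : ℤ) : ℝ) * ((Equiv.Perm.sign τ : ℤ) : ℝ) *
            ∏ i, (rsign (ε (σ i) i) * Real.sqrt (A (σ i) i)) *
                 (rsign (ε (τ i) i) * Real.sqrt (A (τ i) i)) := by
    intro ε
    show (Matrix.det (Matrix.of fun i j => rsign (ε i j) * Real.sqrt (A i j))) ^ 2 = _
    rw [Matrix.det_apply', sq, Finset.sum_mul_sum]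
    simp only [Matrix.of_apply]
    refine Finset.sum_congr rfl fun σ _ => Finset.sum_congr rfl fun τ _ => ?_
    rw [mul_mul_mul_comm, ← Finset.prod_mul_distrib]
  have step1 : ∑ ε : Fin n → Fin n → Bool,
      (Matrix.det (fun i j => rsign (ε i j) * Real.sqrt (A i j))) ^ 2
      = ∑ σ : Equiv.Perm (Fin n), ∑ τ : Equiv.Perm (Fin n),
          ((Equiv.Perm.sign σ : ℤ) : ℝ) * ((Equiv.Perm.sign τ : ℤ) : ℝ) *
            ∑ ε : Fin n → Fin n → Bool,
              ∏ i, (rsign (ε (σ i) i) * Real.sqrt (A (σ i) i)) *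
                   (rsign (ε (τ i) i) * Real.sqrt (A (τ i) i)) := by
    rw [Finset.sum_congr rfl fun ε _ => hdet ε, Finset.sum_comm]
    refine Finset.sum_congr rfl fun σ _ => ?_
    rw [Finset.sum_comm]
    refine Finset.sum_congr rfl fun τ _ => ?_
    rw [← Finset.mul_sum]
  have step2 : ∀ σ τ : Equiv.Perm (Fin n),
      ((Equiv.Perm.sign σ : ℤ) : ℝ) * ((Equiv.Perm.sign τ : ℤ) : ℝ) *
        ∑ ε : Fin n → Fin n → Bool,
          ∏ i, (rsign (ε (σ i) i) * Real.sqrt (A (σ i) i)) *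
               (rsign (ε (τ i) i) * Real.sqrt (A (τ i) i))
      = if σ = τ then (2 : ℝ) ^ (n * n) * ∏ i, A (σ i) i else 0 := by
    intro σ τ
    rw [sum_eps_prod A hA σ τ]
    by_cases h : σ = τ
    · subst h
      rw [if_pos rfl]
      have hs : ((Equiv.Perm.sign σ : ℤ) : ℝ) * ((Equiv.Perm.sign σ : ℤ) : ℝ) = 1 := by
        rcases Int.units_eq_one_or (Equiv.Perm.sign σ) with h | h <;> rw [h] <;> norm_num
      rw [hs, one_mul]
    · rw [if_neg h, mul_zero]
  rw [step1, Finset.sum_congr rfl fun σ _ =>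
    Finset.sum_congr rfl fun τ _ => step2 σ τ]
  have step3 : ∀ σ : Equiv.Perm (Fin n),
      (∑ τ : Equiv.Perm (Fin n),
        if σ = τ then (2 : ℝ) ^ (n * n) * ∏ i, A (σ i) i else 0)
      = (2 : ℝ) ^ (n * n) * ∏ i, A (σ i) i := by
    intro σ
    rw [Finset.sum_ite_eq]
    simp
  rw [Finset.sum_congr rfl fun σ _ => step3 σ, ← Finset.mul_sum]
  rw [Matrix.permanent]
  field_simp
end

section
/- Let A be an n×n complex matrix. Let B be the random matrix obtained from A by replacing each nonzero entry A(i,j) by ε(i,j)·b(i,j), where b(i,j) is the square root of A(i,j) of minimal argument (i.e., if A(i,j) = r·e^{iθ} with r > 0 and θ ∈ (−π, π], then b(i,j) = √r·e^{iθ/2}), zero entries stay zero, and the ε(i,j) are independent uniform random signs in {1, −1}. Then E[(det B)²] = per(A). -/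
open Complex

/-- The random sign corresponding to a Boolean. -/
def csign (b : Bool) : ℂ := if b then 1 else -1

lemma prod_csign_eq (n : ℕ) (σ : Equiv.Perm (Fin n)) (ε : Fin n → Fin n → Bool) :
    (∏ i, csign (ε (σ i) i)) =
      ∏ p : Fin n × Fin n, (if p.1 = σ p.2 then csign (ε p.1 p.2) else 1) := by
  rw [Fintype.prod_prod_type, Finset.prod_comm]
  congr 1
  ext j
  simp

lemma sum_signs (n : ℕ) (σ τ : Equiv.Perm (Fin n)) :
    (∑ ε : Fin n → Fin n → Bool,
        (∏ i, csign (ε (σ i) i)) * (∏ i, csign (ε (τ i) i)))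
      = if σ = τ then (2 : ℂ) ^ (n * n) else 0 := by
  have key : ∀ ε : Fin n → Fin n → Bool,
      (∏ i, csign (ε (σ i) i)) * (∏ i, csign (ε (τ i) i)) =
      ∏ p : Fin n × Fin n,
        ((if p.1 = σ p.2 then csign (ε p.1 p.2) else 1) *
         (if p.1 = τ p.2 then csign (ε p.1 p.2) else 1)) := by
    intro ε
    rw [prod_csign_eq n σ ε, prod_csign_eq n τ ε, ← Finset.prod_mul_distrib]
  simp only [key]
  -- change the sum over curried functions to uncurried
  have hcurry : (∑ ε : Fin n → Fin n → Bool,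
      ∏ p : Fin n × Fin n,
        ((if p.1 = σ p.2 then csign (ε p.1 p.2) else 1) *
         (if p.1 = τ p.2 then csign (ε p.1 p.2) else 1)))
      = ∑ η : Fin n × Fin n → Bool,
      ∏ p : Fin n × Fin n,
        ((if p.1 = σ p.2 then csign (η p) else 1) *
         (if p.1 = τ p.2 then csign (η p) else 1)) := by
    rw [← Equiv.sum_comp (Equiv.curry (Fin n) (Fin n) Bool)]
    rfl
  rw [hcurry, ← Fintype.prod_sum
    (fun (p : Fin n × Fin n) (x : Bool) =>
      (if p.1 = σ p.2 then csign x else 1) * (if p.1 = τ p.2 then csign x else 1))]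
  by_cases h : σ = τ
  · subst h
    simp only [if_pos rfl]
    have : ∀ p : Fin n × Fin n,
        (∑ x : Bool, (if p.1 = σ p.2 then csign x else 1) *
          (if p.1 = σ p.2 then csign x else 1)) = 2 := by
      intro p
      by_cases hp : p.1 = σ p.2 <;> simp [hp, csign, Fintype.sum_bool]
      ring
    rw [Finset.prod_congr rfl (fun p _ => this p), Finset.prod_const]
    simp [Fintype.card_prod]
  · rw [if_neg h]
    obtain ⟨q, hq⟩ : ∃ q, σ q ≠ τ q := by
      by_contra hc
      push_neg at hc
      exact h (Equiv.ext hc)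
    apply Finset.prod_eq_zero (Finset.mem_univ (σ q, q))
    have h1 : (σ q, q).1 = σ (σ q, q).2 := rfl
    have h2 : ¬ ((σ q, q).1 = τ (σ q, q).2) := hq
    simp [h1, h2, csign, Fintype.sum_bool]

/-- For a complex matrix `A`, let `b i j` be the square root of `A i j` of minimal argument
(so `b i j = √r · e^{iθ/2}` if `A i j = r e^{iθ}`, `r > 0`, `θ ∈ (−π, π]`, and `b i j = 0`
when `A i j = 0`); this is the principal branch `A i j ^ (1/2)`.  Let `B ε` be obtained
by multiplying each entry `b i j` by an independent uniform random sign `ε i j ∈ {1, -1}`.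
Then the expectation of `(det B)²` over the `2^(n²)` sign choices equals `per A`. -/
theorem expectation_det_sq_eq_permanent_complex {n : ℕ} (A : Matrix (Fin n) (Fin n) ℂ)
    (b : Matrix (Fin n) (Fin n) ℂ) (hb : ∀ i j, b i j = A i j ^ ((1 : ℂ) / 2)) :
    (1 / 2 ^ (n * n) : ℂ) *
      ∑ ε : Fin n → Fin n → Bool,
        (Matrix.det (fun i j => csign (ε i j) * b i j)) ^ 2
      = A.permanent := by
  have hbb : ∀ i j, b i j * b i j = A i j := by
    intro i j
    rw [hb]
    by_cases h : A i j = 0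
    · rw [h, Complex.zero_cpow (by norm_num), mul_zero]
    · rw [← Complex.cpow_add _ _ h]
      norm_num
  have hdet : ∀ ε : Fin n → Fin n → Bool,
      (Matrix.det (fun i j => csign (ε i j) * b i j)) ^ 2 =
      ∑ σ : Equiv.Perm (Fin n), ∑ τ : Equiv.Perm (Fin n),
        (((Equiv.Perm.sign σ : ℤ) : ℂ) * ((Equiv.Perm.sign τ : ℤ) : ℂ) *
          (∏ i, b (σ i) i) * (∏ i, b (τ i) i)) *
          ((∏ i, csign (ε (σ i) i)) * (∏ i, csign (ε (τ i) i))) := by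
    intro ε
    rw [sq, Matrix.det_apply' (M := fun i j => csign (ε i j) * b i j), Finset.sum_mul_sum]
    refine Finset.sum_congr rfl fun σ _ => Finset.sum_congr rfl fun τ _ => ?_
    simp only [Finset.prod_mul_distrib]
    ring
  simp only [hdet]
  rw [Finset.sum_comm]
  have : ∀ σ : Equiv.Perm (Fin n),
      (∑ ε : Fin n → Fin n → Bool, ∑ τ : Equiv.Perm (Fin n),
        (((Equiv.Perm.sign σ : ℤ) : ℂ) * ((Equiv.Perm.sign τ : ℤ) : ℂ) *
          (∏ i, b (σ i) i) * (∏ i, b (τ i) i)) *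
          ((∏ i, csign (ε (σ i) i)) * (∏ i, csign (ε (τ i) i))))
      = (2 : ℂ) ^ (n * n) * ∏ i, A (σ i) i := by
    intro σ
    rw [Finset.sum_comm]
    have step : ∀ τ : Equiv.Perm (Fin n),
        (∑ ε : Fin n → Fin n → Bool,
          (((Equiv.Perm.sign σ : ℤ) : ℂ) * ((Equiv.Perm.sign τ : ℤ) : ℂ) *
            (∏ i, b (σ i) i) * (∏ i, b (τ i) i)) *
            ((∏ i, csign (ε (σ i) i)) * (∏ i, csign (ε (τ i) i))))
        = (((Equiv.Perm.sign σ : ℤ) : ℂ) * ((Equiv.Perm.sign τ : ℤ) : ℂ) *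
            (∏ i, b (σ i) i) * (∏ i, b (τ i) i)) *
            (if σ = τ then (2 : ℂ) ^ (n * n) else 0) := by
      intro τ
      rw [← Finset.mul_sum, sum_signs]
    simp only [step, mul_ite, mul_zero]
    rw [Finset.sum_ite_eq Finset.univ σ]
    simp only [Finset.mem_univ, if_pos]
    have hsgn : ((Equiv.Perm.sign σ : ℤ) : ℂ) * ((Equiv.Perm.sign σ : ℤ) : ℂ) = 1 := by
      rcases Int.units_eq_one_or (Equiv.Perm.sign σ) with h | h <;> simp [h]
    rw [hsgn, one_mul, ← Finset.prod_mul_distrib]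
    simp only [hbb]
    ring
  simp only [this]
  rw [← Finset.mul_sum, Matrix.permanent]
  have h2 : (2 : ℂ) ^ (n * n) ≠ 0 := pow_ne_zero _ two_ne_zero
  rw [← mul_assoc, one_div, inv_mul_cancel₀ h2, one_mul]
end

section
/- Let D be a finite weighted digraph that is the disjoint union of 'gadget' subgraphs G₁, ..., G_n (covering all vertices) together with a set E₀ of additional edges each of which has both endpoints in (possibly different) gadgets. Then every cycle cover of D restricts, on each gadget G_m together with its incident E₀-edges, to a local configuration, and the total weight of all cycle covers equals Σ over all tuples of compatible local configurations of the product of local weights. -/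
open Finset

/-- Given a tuple of local configurations, one for each gadget (a choice of successor for
each vertex of the gadget), the glued global function. -/
def glue {V G : Type*} (g : V → G) (F : ∀ m : G, {v : V // g v = m} → V) : V → V :=
  fun v => F (g v) ⟨v, rfl⟩

theorem glue_unglue {V G : Type*} (g : V → G) (f : V → V) :
    glue g (fun m v => f v.1) = f := rfl

theorem prod_glue {V G : Type*} [Fintype V] [DecidableEq G] [Fintype G] {R : Type*}
    [CommRing R] (g : V → G) (w : V → V → R) (F : ∀ m : G, {v : V // g v = m} → V) :
    ∏ m : G, ∏ v : {v : V // g v = m}, w v.1 (F m v) = ∏ v : V, w v (glue g F v) := by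
  rw [← (Equiv.sigmaFiberEquiv g).prod_comp (fun v => w v (glue g F v)),
    ← Finset.univ_sigma_univ, Finset.prod_sigma]
  refine Finset.prod_congr rfl fun m _ => Finset.prod_congr rfl fun v _ => ?_
  obtain ⟨v, hv⟩ := v
  subst hv
  rfl

/-- Locality/factorization principle: let a finite weighted digraph (weight function `w`,
with `w u v = 0` when `(u,v)` is not an edge) have its vertex set partitioned into gadgets
by `g : V → G`.  A local configuration at gadget `m` selects, for each vertex of the gadget,
its outgoing edge (either inside the gadget or an `E₀`-edge to another gadget); a tuple of
local configurations is compatible iff the selections glue to a cycle cover, i.e. the glued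
successor function is a bijection.  Then the total weight of all cycle covers equals the sum,
over all compatible tuples of local configurations, of the product over the gadgets of the
local weights. -/
theorem cycleCover_locality {V G : Type*} [Fintype V] [DecidableEq V] [Fintype G]
    [DecidableEq G] {R : Type*} [CommRing R] (g : V → G) (w : V → V → R) :
    ∑ σ : Equiv.Perm V, ∏ v, w v (σ v)
      = ∑ F ∈ Finset.univ.filter
            (fun F : ∀ m : G, {v : V // g v = m} → V => Function.Bijective (glue g F)),
          ∏ m : G, ∏ v : {v : V // g v = m}, w v.1 (F m v) := by
  refine Finset.sum_bij' (fun σ _ => fun m v => σ v.1)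
    (fun F hF => Equiv.ofBijective (glue g F)
      ((Finset.mem_filter.mp hF).2)) ?_ ?_ ?_ ?_ ?_
  · intro σ _
    simp only [mem_filter, mem_univ, true_and]
    rw [glue_unglue]
    exact σ.bijective
  · intro F _; exact mem_univ _
  · intro σ _
    ext v
    rfl
  · intro F hF
    funext m v
    obtain ⟨v, hv⟩ := v
    subst hv
    rfl
  · intro σ _
    rw [prod_glue, glue_unglue]
end
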